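/- For all indices 1 ≤ i, j, k, l ≤ r: [S_{ij} + M_{fⱼ}∘∂_{tᵢ}, S_{kl} + M_{f_l}∘∂_{t_k}] = δ_{jk} • (S_{il} + M_{f_l}∘∂_{tᵢ}) − δ_{il} • (S_{kj} + M_{fⱼ}∘∂_{t_k}) as K-linear endomorphisms of K[x₁,…,xₙ,t₁,…,t_r] (δ the Kronecker delta); this is the bracket computation establishing that the generators s_{ij} + ∂_{tᵢ}f_j of the annihilator ideal form part of a Gröbner basis in Theorem 8.3. -/

import Mathlib

/-!
Write each generator as `M_{g_b} ∘ ∂_{t_a} − δ_{ab}` with `g_b = f_b − t_b`. The multiplication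
operators commute with each other, the derivations `∂_{t_a}` commute with each other, and,
since `f_b` involves no `t`-variable, `[∂_{t_a}, M_{g_b}] = −δ_{ab}`. The bracket of two such
generators is then determined by these three relations alone, which is a computation in an
arbitrary algebra.
-/

open MvPolynomial

variable (K : Type*) [Field K] (n r : ℕ)

/-- The image of `fⱼ ∈ K[x₁,…,xₙ]` in `K[x₁,…,xₙ,t₁,…,t_r]` under the natural
inclusion. -/
noncomputable def liftX (f : MvPolynomial (Fin n) K) :
    MvPolynomial (Fin n ⊕ Fin r) K :=
  rename Sum.inl f

/-- The operator `S_{ij} = −M_{tⱼ} ∘ ∂_{tᵢ} − δ_{ij}·id` on `K[x₁,…,xₙ,t₁,…,t_r]`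
(Mellin substitution `s_{ij} ↦ −tⱼ∂_{tᵢ} − δ_{ij}`). -/
noncomputable def SOp (i j : Fin r) :
    Module.End K (MvPolynomial (Fin n ⊕ Fin r) K) :=
  -(LinearMap.mulLeft K (X (Sum.inr j)) * (pderiv (Sum.inr i)).toLinearMap) -
    (if i = j then (1 : K) else 0) • 1

section Commutator

variable {R A : Type*} [CommRing R] [Ring A] [Algebra R A]

theorem commutator_mul_sub_smul_one {G H D E : A} (a b c d : R) (hGH : Commute G H)
    (hDE : Commute D E) (hDH : D * H = H * D - c • 1) (hEG : E * G = G * E - d • 1) :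
    (G * D - a • 1) * (H * E - b • 1) - (H * E - b • 1) * (G * D - a • 1) =
      d • (H * D - c • 1) - c • (G * E - d • 1) := by
  have scalars_drop : ∀ X Y : A,
      (X - a • 1) * (Y - b • 1) - (Y - b • 1) * (X - a • 1) = X * Y - Y * X := by
    intro X Y
    simp only [sub_mul, mul_sub, smul_mul_assoc, mul_smul_comm, one_mul, mul_one, smul_sub,
      smul_smul, mul_comm a b]
    abel
  calc _ = G * (D * H) * E - H * (E * G) * D := by rw [scalars_drop]; simp only [mul_assoc]
    _ = G * (H * D - c • 1) * E - H * (G * E - d • 1) * D := by rw [hDH, hEG]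
    _ = G * H * (D * E) - c • (G * E) - (H * G * (E * D) - d • (H * D)) := by
      simp only [mul_sub, sub_mul, mul_smul_comm, smul_mul_assoc, mul_one, mul_assoc]
    _ = _ := by
      rw [hGH.eq, hDE.eq]
      simp only [smul_sub, smul_smul, mul_comm c d]
      abel

end Commutator

namespace LinearMap

variable {R A : Type*} [CommRing R]

theorem mulLeft_sub [Ring A] [Algebra R A] (g h : A) :
    mulLeft R (g - h) = mulLeft R g - mulLeft R h :=
  map_sub (LinearMap.mul R A) g h

theorem commute_mulLeft [CommRing A] [Algebra R A] (g h : A) :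
    Commute (mulLeft R g) (mulLeft R h) :=
  (Commute.all g h).map (Algebra.lmul R A)

end LinearMap

namespace MvPolynomial

variable {R σ : Type*} [CommRing R]

theorem pderiv_mul_mulLeft (i : σ) (g : MvPolynomial σ R) :
    (pderiv i).toLinearMap * LinearMap.mulLeft R g =
      LinearMap.mulLeft R g * (pderiv i).toLinearMap + LinearMap.mulLeft R (pderiv i g) := by
  refine LinearMap.ext fun p => ?_
  simp only [Module.End.mul_apply, LinearMap.add_apply, Derivation.coeFn_coe,
    LinearMap.mulLeft_apply, pderiv_mul]
  ring

theorem commute_pderiv (i k : σ) :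
    Commute ((pderiv i).toLinearMap : Module.End R (MvPolynomial σ R)) (pderiv k).toLinearMap := by
  have hbracket : ⁅pderiv i, pderiv k⁆ = (0 : Derivation R (MvPolynomial σ R) (MvPolynomial σ R)) :=
    derivation_ext fun j => by
      rw [Derivation.commutator_apply]
      classical simp [pderiv_X, Pi.single_apply, apply_ite]
  have hcoe : ((⁅pderiv i, pderiv k⁆ : Derivation R (MvPolynomial σ R) (MvPolynomial σ R)) :
      Module.End R (MvPolynomial σ R)) = ⁅(pderiv i).toLinearMap, (pderiv k).toLinearMap⁆ :=
    Derivation.commutator_coe_linear_map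
  rw [hbracket, Ring.lie_def] at hcoe
  exact sub_eq_zero.mp hcoe.symm

end MvPolynomial

section Generators

variable {K n r}

theorem pderiv_inr_liftX (g : MvPolynomial (Fin n) K) (a : Fin r) :
    pderiv (Sum.inr a) (liftX K n r g) = 0 :=
  pderiv_eq_zero_of_notMem_vars fun h => by
    obtain ⟨_, _, hinl⟩ := mem_vars_rename _ _ h
    exact Sum.inl_ne_inr hinl

theorem mulLeft_pderiv_inr_X (a b : Fin r) :
    LinearMap.mulLeft K (pderiv (Sum.inr a) (X (Sum.inr b) : MvPolynomial (Fin n ⊕ Fin r) K)) =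
      (if a = b then (1 : K) else 0) • 1 := by
  by_cases h : a = b
  · subst h
    simp [Module.End.one_eq_id]
  · simp [h]

theorem SOp_add_mulLeft_liftX (g : MvPolynomial (Fin n) K) (a b : Fin r) :
    SOp K n r a b + LinearMap.mulLeft K (liftX K n r g) * (pderiv (Sum.inr a)).toLinearMap =
      LinearMap.mulLeft K (liftX K n r g - X (Sum.inr b)) * (pderiv (Sum.inr a)).toLinearMap -
        (if a = b then (1 : K) else 0) • 1 := by
  rw [SOp, LinearMap.mulLeft_sub, sub_mul]
  abel

theorem pderiv_inr_mul_mulLeft_liftX_sub_X (g : MvPolynomial (Fin n) K) (a b : Fin r) :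
    (pderiv (Sum.inr a)).toLinearMap * LinearMap.mulLeft K (liftX K n r g - X (Sum.inr b)) =
      LinearMap.mulLeft K (liftX K n r g - X (Sum.inr b)) * (pderiv (Sum.inr a)).toLinearMap -
        (if a = b then (1 : K) else 0) • 1 := by
  rw [LinearMap.mulLeft_sub, mul_sub, sub_mul, pderiv_mul_mulLeft, pderiv_mul_mulLeft, pderiv_inr_liftX,
    mulLeft_pderiv_inr_X, LinearMap.mulLeft_zero_eq_zero]
  abel

end Generators

theorem stmt16_general (K : Type*) [Field K] (n r : ℕ)
    (f : Fin r → MvPolynomial (Fin n) K) (i j k l : Fin r) :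
    (SOp K n r i j + LinearMap.mulLeft K (liftX K n r (f j)) *
        (pderiv (Sum.inr i)).toLinearMap) *
      (SOp K n r k l + LinearMap.mulLeft K (liftX K n r (f l)) *
        (pderiv (Sum.inr k)).toLinearMap) -
    (SOp K n r k l + LinearMap.mulLeft K (liftX K n r (f l)) *
        (pderiv (Sum.inr k)).toLinearMap) *
      (SOp K n r i j + LinearMap.mulLeft K (liftX K n r (f j)) *
        (pderiv (Sum.inr i)).toLinearMap) =
    (if j = k then (1 : K) else 0) •
      (SOp K n r i l + LinearMap.mulLeft K (liftX K n r (f l)) *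
        (pderiv (Sum.inr i)).toLinearMap) -
    (if i = l then (1 : K) else 0) •
      (SOp K n r k j + LinearMap.mulLeft K (liftX K n r (f j)) *
        (pderiv (Sum.inr k)).toLinearMap) := by
  simp only [SOp_add_mulLeft_liftX, @eq_comm _ j k]
  exact commutator_mul_sub_smul_one _ _ _ _ (LinearMap.commute_mulLeft _ _) (commute_pderiv _ _)
    (pderiv_inr_mul_mulLeft_liftX_sub_X (f l) i l) (pderiv_inr_mul_mulLeft_liftX_sub_X (f j) k j)

/-- `[S_{ij} + M_{fⱼ}∘∂_{tᵢ}, S_{kl} + M_{f_l}∘∂_{t_k}]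
= δ_{jk} • (S_{il} + M_{f_l}∘∂_{tᵢ}) − δ_{il} • (S_{kj} + M_{fⱼ}∘∂_{t_k})`. -/
theorem stmt16 (K : Type*) [Field K] [CharZero K] (n r : ℕ)
    (f : Fin r → MvPolynomial (Fin n) K) (i j k l : Fin r) :
    (SOp K n r i j + LinearMap.mulLeft K (liftX K n r (f j)) *
        (pderiv (Sum.inr i)).toLinearMap) *
      (SOp K n r k l + LinearMap.mulLeft K (liftX K n r (f l)) *
        (pderiv (Sum.inr k)).toLinearMap) -
    (SOp K n r k l + LinearMap.mulLeft K (liftX K n r (f l)) *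
        (pderiv (Sum.inr k)).toLinearMap) *
      (SOp K n r i j + LinearMap.mulLeft K (liftX K n r (f j)) *
        (pderiv (Sum.inr i)).toLinearMap) =
    (if j = k then (1 : K) else 0) •
      (SOp K n r i l + LinearMap.mulLeft K (liftX K n r (f l)) *
        (pderiv (Sum.inr i)).toLinearMap) -
    (if i = l then (1 : K) else 0) •
      (SOp K n r k j + LinearMap.mulLeft K (liftX K n r (f j)) *
        (pderiv (Sum.inr k)).toLinearMap) :=
  stmt16_general K n r f i j k l
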